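/- Fix integers 1 ≤ d ≤ d' and a real s ≥ d. Let A and B be bounded subsets of ℝ^{d'}, and set g_A = liminf_{N→∞} ℰ_s(A,N)/τ_{s,d}(N) and g_B = liminf_{N→∞} ℰ_s(B,N)/τ_{s,d}(N), both taken in the extended nonnegative reals [0,∞]. Then liminf_{N→∞} ℰ_s(A∪B,N)/τ_{s,d}(N) ≥ (g_A^{−d/s} + g_B^{−d/s})^{−s/d}, where the right-hand side is interpreted in [0,∞] with the conventions ∞^{−d/s} = 0 and 0^{−s/d} = ∞ (so it equals g_B if g_A = ∞, equals g_A if g_B = ∞, and equals ∞ if both are ∞). -/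

import Mathlib

open scoped ENNReal NNReal BigOperators Classical
open MeasureTheory Filter Metric Set Topology

/-- The Riesz `s`-energy of a finite configuration `ω`, valued in `[0,∞]`. -/
noncomputable def rieszEnergy {E : Type*} [PseudoEMetricSpace E] (s : ℝ) (ω : Finset E) : ℝ≥0∞ :=
  ∑ x ∈ ω, ∑ y ∈ ω, if x = y then 0 else edist x y ^ (-s)

/-- The `N`-point minimal Riesz `s`-energy over a set `A` (infimum over all `N`-point
subsets of `A`; `∞` if there is none). -/
noncomputable def minRieszEnergy {E : Type*} [PseudoEMetricSpace E] (s : ℝ) (A : Set E)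
    (N : ℕ) : ℝ≥0∞ :=
  ⨅ (ω : Finset E) (_ : ↑ω ⊆ A) (_ : ω.card = N), rieszEnergy s ω

/-- The normalizing sequence `τ_{s,d}(N)`: `N^{1+s/d}` for `s > d` and `N² log N` for `s = d`. -/
noncomputable def tauNorm (s : ℝ) (d : ℕ) (N : ℕ) : ℝ :=
  if s = (d : ℝ) then (N : ℝ) ^ 2 * Real.log N else (N : ℝ) ^ (1 + s / (d : ℝ))

/-!
Split an `N`-point configuration in `A ∪ B` into its points in `A` and the remaining ones, which
lie in `B`: then `ℰ(A ∪ B, N) ≥ min_k (ℰ(A, k) + ℰ(B, N - k))`. For `a < g_A`, `b < g_B` one has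
`ℰ(A, k) ≥ a τ(k) - C` and `ℰ(B, j) ≥ b τ(j) - C` for all `k`, `j`, and with `σ = s / d`
convexity of `t ↦ t ^ (1 + σ)` gives `a k ^ (1 + σ) + b (N - k) ^ (1 + σ) ≥ c N ^ (1 + σ)` for
`c = (a ^ (-1/σ) + b ^ (-1/σ)) ^ (-σ)`; when `s = d` the logarithmic factor only costs `O(N²)`,
which is `o(N² log N)`. Finally `(x, y) ↦ (x ^ (-1/σ) + y ^ (-1/σ)) ^ (-σ)` is continuous on
`[0, ∞]²`, so one may let `a ↑ g_A` and `b ↑ g_B`.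
-/

section Energy

variable {E : Type*} [PseudoEMetricSpace E]

lemma rieszEnergy_add_rieszEnergy_sdiff_le (s : ℝ) {ω ω' : Finset E} (h : ω' ⊆ ω) :
    rieszEnergy s ω' + rieszEnergy s (ω \ ω') ≤ rieszEnergy s ω := by
  have restrict_le : ∀ t ⊆ ω, rieszEnergy s t ≤
      ∑ x ∈ t, ∑ y ∈ ω, (if x = y then 0 else edist x y ^ (-s)) := fun t ht =>
    Finset.sum_le_sum fun x _ => Finset.sum_le_sum_of_subset ht
  calc rieszEnergy s ω' + rieszEnergy s (ω \ ω')
      ≤ (∑ x ∈ ω', ∑ y ∈ ω, (if x = y then 0 else edist x y ^ (-s))) +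
          ∑ x ∈ ω \ ω', ∑ y ∈ ω, (if x = y then 0 else edist x y ^ (-s)) :=
        add_le_add (restrict_le ω' h) (restrict_le _ Finset.sdiff_subset)
    _ = rieszEnergy s ω := by rw [add_comm]; exact Finset.sum_sdiff h

lemma minRieszEnergy_le_rieszEnergy (s : ℝ) {A : Set E} {ω : Finset E} (h : ↑ω ⊆ A) :
    minRieszEnergy s A ω.card ≤ rieszEnergy s ω :=
  iInf_le_of_le ω <| iInf_le_of_le h <| iInf_le_of_le rfl le_rfl

lemma iInf_le_minRieszEnergy_union (s : ℝ) (A B : Set E) (N : ℕ) :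
    ⨅ k ≤ N, (minRieszEnergy s A k + minRieszEnergy s B (N - k)) ≤
      minRieszEnergy s (A ∪ B) N := by
  refine le_iInf fun ω => le_iInf fun hω => le_iInf fun hcard => ?_
  set ωA := ω.filter (· ∈ A)
  have hωA : ↑ωA ⊆ A := fun x hx => (Finset.mem_filter.1 hx).2
  have hωB : ↑(ω \ ωA) ⊆ B := fun x hx => by
    obtain ⟨hxω, hxA⟩ := Finset.mem_sdiff.1 hx
    exact (hω hxω).resolve_left fun h => hxA (Finset.mem_filter.2 ⟨hxω, h⟩)
  have hk : ωA.card ≤ N := hcard ▸ Finset.card_filter_le _ _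
  have hcardB : (ω \ ωA).card = N - ωA.card := by
    rw [Finset.card_sdiff_of_subset (Finset.filter_subset _ _), hcard]
  calc ⨅ k ≤ N, (minRieszEnergy s A k + minRieszEnergy s B (N - k))
      ≤ minRieszEnergy s A ωA.card + minRieszEnergy s B (N - ωA.card) := iInf₂_le ωA.card hk
    _ ≤ rieszEnergy s ωA + rieszEnergy s (ω \ ωA) := by
        rw [← hcardB]
        exact add_le_add (minRieszEnergy_le_rieszEnergy s hωA)
          (minRieszEnergy_le_rieszEnergy s hωB)
    _ ≤ rieszEnergy s ω := rieszEnergy_add_rieszEnergy_sdiff_le s (Finset.filter_subset _ _)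

end Energy

lemma sq_mul_log_le_sq_mul_log_add_sq {x y : ℝ} (hx : 0 ≤ x) (hxy : x ≤ y) :
    x ^ 2 * Real.log y ≤ x ^ 2 * Real.log x + y ^ 2 := by
  rcases hx.eq_or_lt with rfl | hx
  · simp [sq_nonneg]
  have hy : 0 < y := hx.trans_le hxy
  have hlog : Real.log y - Real.log x ≤ y / x - 1 := by
    rw [← Real.log_div hy.ne' hx.ne']
    exact Real.log_le_sub_one_of_pos (div_pos hy hx)
  have : x ^ 2 * (y / x - 1) = x * y - x ^ 2 := by field_simp
  nlinarith [mul_le_mul_of_nonneg_left hlog (sq_nonneg x)]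

/-- Convexity of `z ↦ z ^ (1 + σ)`, applied with weights proportional to `α` and `β`. -/
lemma add_rpow_one_add_le {σ α β t u : ℝ} (hσ : 0 ≤ σ) (hα : 0 < α) (hβ : 0 < β)
    (ht : 0 ≤ t) (hu : 0 ≤ u) :
    (t + u) ^ (1 + σ) ≤
      (α + β) ^ σ * (α ^ (-σ) * t ^ (1 + σ) + β ^ (-σ) * u ^ (1 + σ)) := by
  set S := α + β
  have hS : 0 < S := add_pos hα hβ
  have weighted : ∀ w z : ℝ, 0 < w → 0 ≤ z →
      w / S * (S / w * z) ^ (1 + σ) = S ^ σ * (w ^ (-σ) * z ^ (1 + σ)) := fun w z hw hz => by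
    rw [Real.mul_rpow (div_pos hS hw).le hz, Real.rpow_add (div_pos hS hw), Real.rpow_one,
      Real.div_rpow hS.le hw.le, Real.rpow_neg hw.le]
    field_simp
  have hconv := (convexOn_rpow (by linarith : (1 : ℝ) ≤ 1 + σ)).2
    (mem_Ici.2 (by positivity : 0 ≤ S / α * t)) (mem_Ici.2 (by positivity : 0 ≤ S / β * u))
    (div_pos hα hS).le (div_pos hβ hS).le (by rw [← add_div, div_self hS.ne'])
  have hsum : α / S * (S / α * t) + β / S * (S / β * u) = t + u := by
    field_simp [hS.ne', hα.ne', hβ.ne']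
  simp only [smul_eq_mul, hsum, weighted α t hα ht, weighted β u hβ hu] at hconv
  rwa [mul_add]

lemma rpow_neg_add_rpow_neg_rpow_mul_le {σ a b t u : ℝ} (hσ : 0 < σ) (ha : 0 < a) (hb : 0 < b)
    (ht : 0 ≤ t) (hu : 0 ≤ u) :
    (a ^ (-σ⁻¹) + b ^ (-σ⁻¹)) ^ (-σ) * (t + u) ^ (1 + σ) ≤
      a * t ^ (1 + σ) + b * u ^ (1 + σ) := by
  have recover : ∀ x : ℝ, 0 < x → (x ^ (-σ⁻¹)) ^ (-σ) = x := fun x hx => by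
    rw [← Real.rpow_mul hx.le, neg_mul_neg, inv_mul_cancel₀ hσ.ne', Real.rpow_one]
  set S := a ^ (-σ⁻¹) + b ^ (-σ⁻¹)
  have hS : 0 < S := by positivity
  have h := add_rpow_one_add_le hσ.le (Real.rpow_pos_of_pos ha (-σ⁻¹))
    (Real.rpow_pos_of_pos hb (-σ⁻¹)) ht hu
  rw [recover a ha, recover b hb] at h
  calc S ^ (-σ) * (t + u) ^ (1 + σ)
      ≤ S ^ (-σ) * (S ^ σ * (a * t ^ (1 + σ) + b * u ^ (1 + σ))) := by gcongr
    _ = a * t ^ (1 + σ) + b * u ^ (1 + σ) := by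
        rw [← mul_assoc, ← Real.rpow_add hS, neg_add_cancel, Real.rpow_zero, one_mul]

lemma tendsto_tauNorm_atTop {s : ℝ} (hs : 0 ≤ s) (d : ℕ) :
    Tendsto (tauNorm s d) atTop atTop := by
  unfold tauNorm
  split_ifs
  · exact (tendsto_pow_atTop two_ne_zero).atTop_mul_atTop₀ Real.tendsto_log_atTop
      |>.comp tendsto_natCast_atTop_atTop
  · exact (tendsto_rpow_atTop (by positivity)).comp tendsto_natCast_atTop_atTop

lemma eventually_mul_tauNorm_le_add {d : ℕ} (hd : 0 < d) {s : ℝ} (hs : d ≤ s) {a b c : ℝ}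
    (ha : 0 < a) (hb : 0 < b)
    (hc : c < (a ^ (-(s / d)⁻¹) + b ^ (-(s / d)⁻¹)) ^ (-(s / d))) :
    ∀ᶠ N in atTop, ∀ k ≤ N, c * tauNorm s d N ≤ a * tauNorm s d k + b * tauNorm s d (N - k) := by
  have hd₀ : (0 : ℝ) < d := Nat.cast_pos.2 hd
  have hσ : 0 < s / d := div_pos (hd₀.trans_le hs) hd₀
  set c₀ := (a ^ (-(s / d)⁻¹) + b ^ (-(s / d)⁻¹)) ^ (-(s / d))
  have split : ∀ N k : ℕ, k ≤ N →
      c₀ * (N : ℝ) ^ (1 + s / d) ≤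
        a * (k : ℝ) ^ (1 + s / d) + b * ((N - k : ℕ) : ℝ) ^ (1 + s / d) :=
    fun N k hk => by
      have h := rpow_neg_add_rpow_neg_rpow_mul_le hσ ha hb k.cast_nonneg (N - k).cast_nonneg
      rwa [← Nat.cast_add, Nat.add_sub_cancel' hk] at h
  rcases hs.eq_or_lt with hsd | hsd
  · have hσ1 : s / d = 1 := by rw [← hsd, div_self hd₀.ne']
    simp only [tauNorm, ← hsd, if_true]
    rw [hσ1] at split
    filter_upwards [(Real.tendsto_log_atTop.comp tendsto_natCast_atTop_atTop).eventually_ge_atTop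
      ((a + b) / (c₀ - c))] with N hN k hk
    have hlog : a + b ≤ (c₀ - c) * Real.log N := (div_le_iff₀' (sub_pos.2 hc)).1 hN
    have hsplit := split N k hk
    norm_num only [Real.rpow_two] at hsplit
    have hkN : (k : ℝ) ≤ N := Nat.cast_le.2 hk
    have hjN : ((N - k : ℕ) : ℝ) ≤ N := Nat.cast_le.2 (Nat.sub_le N k)
    have hA := sq_mul_log_le_sq_mul_log_add_sq k.cast_nonneg hkN
    have hB := sq_mul_log_le_sq_mul_log_add_sq (N - k).cast_nonneg hjN
    have hlogN : 0 ≤ Real.log N := Real.log_natCast_nonneg N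
    calc c * ((N : ℝ) ^ 2 * Real.log N)
        ≤ c₀ * (N : ℝ) ^ 2 * Real.log N - (a + b) * (N : ℝ) ^ 2 := by
          linarith [mul_le_mul_of_nonneg_left hlog (sq_nonneg (N : ℝ))]
      _ ≤ (a * (k : ℝ) ^ 2 + b * ((N - k : ℕ) : ℝ) ^ 2) * Real.log N - (a + b) * (N : ℝ) ^ 2 := by
          gcongr
      _ ≤ a * ((k : ℝ) ^ 2 * Real.log k) + b * (((N - k : ℕ) : ℝ) ^ 2 * Real.log (N - k : ℕ)) := by
          linarith [mul_le_mul_of_nonneg_left hA ha.le, mul_le_mul_of_nonneg_left hB hb.le]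
  · simp only [tauNorm, hsd.ne', if_false]
    refine Eventually.of_forall fun N k hk => le_trans ?_ (split N k hk)
    gcongr

lemma exists_ofReal_mul_sub_le_of_lt_liminf {f : ℕ → ℝ≥0∞} {τ : ℕ → ℝ} {a : ℝ} (ha : 0 ≤ a)
    (h : ENNReal.ofReal a < atTop.liminf fun n => f n / ENNReal.ofReal (τ n)) :
    ∃ C, ∀ n, ENNReal.ofReal (a * τ n - C) ≤ f n := by
  obtain ⟨M, hM⟩ := eventually_atTop.1 (eventually_lt_of_lt_liminf h)
  obtain ⟨C, hC⟩ := ((Finset.range M).image fun n => a * τ n).exists_le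
  refine ⟨max C 0, fun n => ?_⟩
  rcases lt_or_ge n M with hn | hn
  · have : a * τ n ≤ max C 0 :=
      (hC _ (Finset.mem_image_of_mem _ (Finset.mem_range.2 hn))).trans (le_max_left _ _)
    rw [ENNReal.ofReal_of_nonpos (sub_nonpos.2 this)]
    exact zero_le
  · calc ENNReal.ofReal (a * τ n - max C 0)
        ≤ ENNReal.ofReal (a * τ n) := ENNReal.ofReal_le_ofReal (by simp)
      _ = ENNReal.ofReal a * ENNReal.ofReal (τ n) := ENNReal.ofReal_mul ha
      _ ≤ f n := ENNReal.mul_le_of_le_div (hM n hn).le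

lemma ofReal_le_liminf_div_of_forall_lt {f : ℕ → ℝ≥0∞} {τ : ℕ → ℝ}
    (hτ : Tendsto τ atTop atTop) {c : ℝ}
    (h : ∀ c' < c, ∃ C, ∀ᶠ N in atTop, ENNReal.ofReal (c' * τ N - C) ≤ f N) :
    ENNReal.ofReal c ≤ atTop.liminf fun N => f N / ENNReal.ofReal (τ N) := by
  refine le_of_forall_lt_imp_le_of_dense fun r hr => ?_
  have hr' : r.toReal < c := (ENNReal.lt_ofReal_iff_toReal_lt hr.ne_top).1 hr
  obtain ⟨C, hC⟩ := h ((r.toReal + c) / 2) (by linarith)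
  refine le_liminf_of_le (by isBoundedDefault) ?_
  filter_upwards [hC, hτ.eventually_ge_atTop (max (2 * C / (c - r.toReal)) 1)] with N hN hτN
  have hτ₀ : 0 < τ N := zero_lt_one.trans_le ((le_max_right _ _).trans hτN)
  have hCτ : 2 * C ≤ τ N * (c - r.toReal) :=
    (div_le_iff₀ (by linarith)).1 ((le_max_left _ _).trans hτN)
  rw [ENNReal.le_div_iff_mul_le (Or.inl (ENNReal.ofReal_pos.2 hτ₀).ne')
    (Or.inl ENNReal.ofReal_ne_top), ← ENNReal.ofReal_toReal hr.ne_top,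
    ← ENNReal.ofReal_mul ENNReal.toReal_nonneg]
  exact (ENNReal.ofReal_le_ofReal (by linarith)).trans hN

section Union

variable {E : Type*} [PseudoEMetricSpace E]

lemma ofReal_le_liminf_minRieszEnergy_union {d : ℕ} (hd : 0 < d) {s : ℝ} (hs : d ≤ s)
    (A B : Set E) {a b : ℝ} (ha : 0 < a) (hb : 0 < b)
    (hA : ENNReal.ofReal a <
      atTop.liminf fun N : ℕ => minRieszEnergy s A N / ENNReal.ofReal (tauNorm s d N))
    (hB : ENNReal.ofReal b <
      atTop.liminf fun N : ℕ => minRieszEnergy s B N / ENNReal.ofReal (tauNorm s d N)) :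
    ENNReal.ofReal ((a ^ (-(s / d)⁻¹) + b ^ (-(s / d)⁻¹)) ^ (-(s / d))) ≤
      atTop.liminf fun N : ℕ => minRieszEnergy s (A ∪ B) N / ENNReal.ofReal (tauNorm s d N) := by
  obtain ⟨CA, hCA⟩ := exists_ofReal_mul_sub_le_of_lt_liminf ha.le hA
  obtain ⟨CB, hCB⟩ := exists_ofReal_mul_sub_le_of_lt_liminf hb.le hB
  have hs₀ : 0 ≤ s := (Nat.cast_nonneg d).trans hs
  refine ofReal_le_liminf_div_of_forall_lt (tendsto_tauNorm_atTop hs₀ d) fun c hc => ⟨CA + CB, ?_⟩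
  filter_upwards [eventually_mul_tauNorm_le_add hd hs ha hb hc] with N hN
  refine le_trans (le_iInf₂ fun k hk => ?_) (iInf_le_minRieszEnergy_union s A B N)
  calc ENNReal.ofReal (c * tauNorm s d N - (CA + CB))
      ≤ ENNReal.ofReal ((a * tauNorm s d k - CA) + (b * tauNorm s d (N - k) - CB)) :=
        ENNReal.ofReal_le_ofReal (by linarith [hN k hk])
    _ ≤ ENNReal.ofReal (a * tauNorm s d k - CA) + ENNReal.ofReal (b * tauNorm s d (N - k) - CB) :=
        ENNReal.ofReal_add_le
    _ ≤ minRieszEnergy s A k + minRieszEnergy s B (N - k) := add_le_add (hCA k) (hCB (N - k))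

end Union

lemma le_of_forall_lt_of_continuous {α β γ : Type*} [TopologicalSpace α] [LinearOrder α]
    [OrderTopology α] [DenselyOrdered α] [TopologicalSpace β] [LinearOrder β] [OrderTopology β]
    [DenselyOrdered β] [TopologicalSpace γ] [Preorder γ] [ClosedIicTopology γ] {f : α × β → γ}
    (hf : Continuous f) {x : α} {y : β} (hx : (Iio x).Nonempty) (hy : (Iio y).Nonempty) {L : γ}
    (h : ∀ a < x, ∀ b < y, f (a, b) ≤ L) : f (x, y) ≤ L := by
  have hxy : (x, y) ∈ closure (Iio x ×ˢ Iio y) := by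
    rw [closure_prod_eq, closure_Iio' hx, closure_Iio' hy]
    exact ⟨le_rfl, le_rfl⟩
  exact closure_minimal (fun p hp => h _ hp.1 _ hp.2) (isClosed_Iic.preimage hf) hxy

lemma ENNReal.rpow_neg_add_rpow_neg_rpow_le {σ : ℝ} (hσ : 0 < σ) {x y L : ℝ≥0∞}
    (h : ∀ a b : ℝ, 0 < a → 0 < b → ENNReal.ofReal a < x → ENNReal.ofReal b < y →
      ENNReal.ofReal ((a ^ (-σ⁻¹) + b ^ (-σ⁻¹)) ^ (-σ)) ≤ L) :
    (x ^ (-σ⁻¹) + y ^ (-σ⁻¹)) ^ (-σ) ≤ L := by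
  have vanish : ∀ a b : ℝ≥0∞, a = 0 ∨ b = 0 → (a ^ (-σ⁻¹) + b ^ (-σ⁻¹)) ^ (-σ) = 0 := by
    have : (0 : ℝ≥0∞) ^ (-σ⁻¹) = ⊤ := ENNReal.zero_rpow_of_neg (by simpa using hσ)
    rintro a b (rfl | rfl) <;> simp [this, ENNReal.top_rpow_of_neg (neg_neg_of_pos hσ)]
  by_cases hxy : x = 0 ∨ y = 0
  · rw [vanish x y hxy]; exact zero_le
  obtain ⟨hx, hy⟩ := not_or.1 hxy
  refine le_of_forall_lt_of_continuous (f := fun p => (p.1 ^ (-σ⁻¹) + p.2 ^ (-σ⁻¹)) ^ (-σ))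
    (by fun_prop) ⟨0, pos_iff_ne_zero.2 hx⟩ ⟨0, pos_iff_ne_zero.2 hy⟩ fun a ha b hb => ?_
  by_cases hab : a = 0 ∨ b = 0
  · rw [vanish a b hab]; exact zero_le
  obtain ⟨ha₀, hb₀⟩ := not_or.1 hab
  obtain ⟨a, rfl⟩ : ∃ a' : ℝ, a = ENNReal.ofReal a' := ⟨_, (ENNReal.ofReal_toReal ha.ne_top).symm⟩
  obtain ⟨b, rfl⟩ : ∃ b' : ℝ, b = ENNReal.ofReal b' := ⟨_, (ENNReal.ofReal_toReal hb.ne_top).symm⟩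
  replace ha₀ : 0 < a := ENNReal.ofReal_pos.1 (pos_iff_ne_zero.2 ha₀)
  replace hb₀ : 0 < b := ENNReal.ofReal_pos.1 (pos_iff_ne_zero.2 hb₀)
  dsimp only
  rw [ENNReal.ofReal_rpow_of_pos ha₀, ENNReal.ofReal_rpow_of_pos hb₀,
    ← ENNReal.ofReal_add (by positivity) (by positivity),
    ENNReal.ofReal_rpow_of_pos (by positivity)]
  exact h _ _ ha₀ hb₀ ha hb

theorem liminf_union_ge_general (d d' : ℕ) (hd : 1 ≤ d) (s : ℝ) (hs : (d : ℝ) ≤ s)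
    (A B : Set (EuclideanSpace ℝ (Fin d'))) :
    ((atTop.liminf fun N : ℕ =>
        minRieszEnergy s A N / ENNReal.ofReal (tauNorm s d N)) ^ (-(d : ℝ) / s) +
      (atTop.liminf fun N : ℕ =>
        minRieszEnergy s B N / ENNReal.ofReal (tauNorm s d N)) ^ (-(d : ℝ) / s))
        ^ (-(s / (d : ℝ))) ≤
      atTop.liminf fun N : ℕ =>
        minRieszEnergy s (A ∪ B) N / ENNReal.ofReal (tauNorm s d N) := by
  have hd₀ : (0 : ℝ) < d := Nat.cast_pos.2 hd
  rw [neg_div, ← inv_div]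
  exact ENNReal.rpow_neg_add_rpow_neg_rpow_le (div_pos (hd₀.trans_le hs) hd₀)
    fun a b ha hb hA hB => ofReal_le_liminf_minRieszEnergy_union hd hs A B ha hb hA hB

/-- lower bound for the lim inf of the normalized minimal energy of a union of
two bounded sets, with `ENNReal` rpow conventions at `0` and `∞`. -/
theorem liminf_union_ge (d d' : ℕ) (hd : 1 ≤ d) (hdd : d ≤ d') (s : ℝ) (hs : (d : ℝ) ≤ s)
    (A B : Set (EuclideanSpace ℝ (Fin d')))
    (hA : Bornology.IsBounded A) (hB : Bornology.IsBounded B) :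
    ((atTop.liminf fun N : ℕ =>
        minRieszEnergy s A N / ENNReal.ofReal (tauNorm s d N)) ^ (-(d : ℝ) / s) +
      (atTop.liminf fun N : ℕ =>
        minRieszEnergy s B N / ENNReal.ofReal (tauNorm s d N)) ^ (-(d : ℝ) / s))
        ^ (-(s / (d : ℝ))) ≤
      atTop.liminf fun N : ℕ =>
        minRieszEnergy s (A ∪ B) N / ENNReal.ofReal (tauNorm s d N) :=
  liminf_union_ge_general d d' hd s hs A B
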